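/- arXiv:2507.19669 — 2 statements merged into one kernel-verified Lean document; each statement's English description precedes it below -/
import Mathlib

section
/- Let R be a Dedekind domain with fraction field K, let I be a nonzero integral ideal, and suppose [a:b], [a':b'] ∈ P¹(K) satisfy aI + bR = λ(a'I + b'R) for some λ ∈ K^×. Then there exists a matrix M = (x y; z t) with x, t ∈ R, y ∈ I⁻¹, z ∈ I, determinant xt − yz = 1, and M·[a':b'] = [a:b]. -/
open FractionalIdeal nonZeroDivisors

/-!
Write `J = aI + bR`. Since `J` is invertible, `1 ∈ J J⁻¹ = a (I J⁻¹) + b J⁻¹` gives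
`p ∈ I J⁻¹`, `q ∈ J⁻¹` with `ap + bq = 1`, i.e. a matrix `A = (a -q; b p)` of determinant one
with `A·[1:0] = [a:b]`, whose entries lie in `J I⁻¹, J⁻¹; J, I J⁻¹`. After rescaling `(a, b)` by
`λ⁻¹` both points span the same `J`, and `M = A A'⁻¹` has entries in `R, I⁻¹; I, R`.
-/

namespace FractionalIdeal

variable {R K : Type*} [CommRing R] [IsDedekindDomain R] [Field K] [Algebra R K]
  [IsFractionRing R K] {I : FractionalIdeal R⁰ K} {a b : K}

theorem spanSingleton_mul_add_spanSingleton_ne_zero (hI : I ≠ 0) (hab : ¬(a = 0 ∧ b = 0)) :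
    spanSingleton R⁰ a * I + spanSingleton R⁰ b ≠ 0 := by
  simpa [add_eq_zero, mul_eq_zero, spanSingleton_eq_zero_iff, hI] using hab

theorem mem_mul_inv_of_spanSingleton_mul_le {J : FractionalIdeal R⁰ K} (hI : I ≠ 0)
    (h : spanSingleton R⁰ a * I ≤ J) : a ∈ J * I⁻¹ := by
  have : spanSingleton R⁰ a ≤ J * I⁻¹ := by
    rw [← mul_inv_cancel_right₀ hI (spanSingleton R⁰ a)]
    exact mul_le_mul_left h _
  exact this (mem_spanSingleton_self R⁰ a)

theorem exists_mul_add_mul_eq_one (hJ : spanSingleton R⁰ a * I + spanSingleton R⁰ b ≠ 0) :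
    ∃ p ∈ I * (spanSingleton R⁰ a * I + spanSingleton R⁰ b)⁻¹,
      ∃ q ∈ (spanSingleton R⁰ a * I + spanSingleton R⁰ b)⁻¹, a * p + b * q = 1 := by
  set J := spanSingleton R⁰ a * I + spanSingleton R⁰ b
  have hone : (1 : K) ∈ spanSingleton R⁰ a * (I * J⁻¹) + spanSingleton R⁰ b * J⁻¹ := by
    rw [← mul_assoc, ← add_mul, mul_inv_cancel₀ hJ]
    exact one_mem_one R⁰
  obtain ⟨_, hu, _, hv, huv⟩ := (mem_add _ _ _).mp hone
  obtain ⟨p, hp, rfl⟩ := mem_singleton_mul.mp hu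
  obtain ⟨q, hq, rfl⟩ := mem_singleton_mul.mp hv
  exact ⟨p, hp, q, hq, huv⟩

theorem exists_matrix_of_spanSingleton_mul_add_eq {a' b' : K} (hI : I ≠ 0)
    (hJ : spanSingleton R⁰ a * I + spanSingleton R⁰ b ≠ 0)
    (h : spanSingleton R⁰ a * I + spanSingleton R⁰ b =
      spanSingleton R⁰ a' * I + spanSingleton R⁰ b') :
    ∃ x y z t : K, x ∈ (1 : FractionalIdeal R⁰ K) ∧ t ∈ (1 : FractionalIdeal R⁰ K) ∧
      y ∈ I⁻¹ ∧ z ∈ I ∧ x * t - y * z = 1 ∧ x * a' + y * b' = a ∧ z * a' + t * b' = b := by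
  obtain ⟨p, hp, q, hq, hpq⟩ := exists_mul_add_mul_eq_one hJ
  obtain ⟨p', hp', q', hq', hpq'⟩ := exists_mul_add_mul_eq_one (h ▸ hJ)
  rw [← h] at hp' hq'
  set J := spanSingleton R⁰ a * I + spanSingleton R⁰ b
  have ha : a ∈ J * I⁻¹ := mem_mul_inv_of_spanSingleton_mul_le hI le_self_add
  have hb : b ∈ J := (le_add_self : spanSingleton R⁰ b ≤ J) (mem_spanSingleton_self R⁰ b)
  have ha' : a' ∈ J * I⁻¹ := mem_mul_inv_of_spanSingleton_mul_le hI (h ▸ le_self_add)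
  have hb' : b' ∈ J := h ▸ (le_add_self : spanSingleton R⁰ b' ≤ _) (mem_spanSingleton_self R⁰ b')
  have mul_mem_of_eq {P Q T : FractionalIdeal R⁰ K} {u v : K} (hu : u ∈ P) (hv : v ∈ Q)
      (hT : P * Q = T) : u * v ∈ T :=
    hT ▸ mul_mem_mul hu hv
  refine ⟨a * p' + q * b', a * q' - q * a', b * p' - p * b', b * q' + p * a', ?_, ?_, ?_, ?_,
    by linear_combination (a' * p' + b' * q') * hpq + hpq', by linear_combination a * hpq',
    by linear_combination b * hpq'⟩
  · exact Submodule.add_mem _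
      (mul_mem_of_eq ha hp' (by field_simp)) (mul_mem_of_eq hq hb' (by field_simp))
  · exact Submodule.add_mem _
      (mul_mem_of_eq hb hq' (by field_simp)) (mul_mem_of_eq hp ha' (by field_simp))
  · exact Submodule.sub_mem _
      (mul_mem_of_eq ha hq' (by field_simp)) (mul_mem_of_eq hq ha' (by field_simp))
  · exact Submodule.sub_mem _
      (mul_mem_of_eq hb hp' (by field_simp)) (mul_mem_of_eq hp hb' (by field_simp))

end FractionalIdeal

theorem matrix_carrying_point_to_point_general
    (R K : Type) [CommRing R] [IsDedekindDomain R] [Field K] [Algebra R K]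
    [IsFractionRing R K] (I : Ideal R) (hI : I ≠ 0)
    (a b a' b' : K) (hab' : ¬(a' = 0 ∧ b' = 0))
    (lam : Kˣ)
    (hlam : spanSingleton R⁰ a * (I : FractionalIdeal R⁰ K) + spanSingleton R⁰ b =
      spanSingleton R⁰ (lam : K) *
        (spanSingleton R⁰ a' * (I : FractionalIdeal R⁰ K) + spanSingleton R⁰ b')) :
    ∃ x y z t : K,
      x ∈ (1 : FractionalIdeal R⁰ K) ∧ t ∈ (1 : FractionalIdeal R⁰ K) ∧
      y ∈ ((I : FractionalIdeal R⁰ K))⁻¹ ∧ z ∈ (I : FractionalIdeal R⁰ K) ∧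
      x * t - y * z = 1 ∧
      ∃ c : Kˣ, x * a' + y * b' = (c : K) * a ∧ z * a' + t * b' = (c : K) * b := by
  have hI' : (I : FractionalIdeal R⁰ K) ≠ 0 := coeIdeal_ne_zero.mpr hI
  have hrescaled : spanSingleton R⁰ (↑lam⁻¹ * a) * (I : FractionalIdeal R⁰ K) +
      spanSingleton R⁰ (↑lam⁻¹ * b) = spanSingleton R⁰ a' * I + spanSingleton R⁰ b' := by
    rw [← spanSingleton_mul_spanSingleton, ← spanSingleton_mul_spanSingleton, mul_assoc, ← mul_add,
      hlam, ← mul_assoc, spanSingleton_mul_spanSingleton, Units.inv_mul, spanSingleton_one, one_mul]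
  obtain ⟨x, y, z, t, hx, ht, hy, hz, hdet, hxy, hzt⟩ :=
    exists_matrix_of_spanSingleton_mul_add_eq hI'
      (hrescaled ▸ spanSingleton_mul_add_spanSingleton_ne_zero hI' hab') hrescaled
  exact ⟨x, y, z, t, hx, ht, hy, hz, hdet, lam⁻¹, hxy, hzt⟩

/-- Injectivity step: if `aI + bR = λ(a'I + b'R)` for some `λ ∈ K^×`, then there
is a matrix `M = (x y; z t)` with `x, t ∈ R`, `y ∈ I⁻¹`, `z ∈ I`, determinant
`xt − yz = 1`, carrying `[a' : b']` to `[a : b]` in `ℙ¹(K)`. -/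
theorem matrix_carrying_point_to_point
    (R K : Type) [CommRing R] [IsDedekindDomain R] [Field K] [Algebra R K]
    [IsFractionRing R K] (I : Ideal R) (hI : I ≠ 0)
    (a b a' b' : K) (hab : ¬(a = 0 ∧ b = 0)) (hab' : ¬(a' = 0 ∧ b' = 0))
    (lam : Kˣ)
    (hlam : spanSingleton R⁰ a * (I : FractionalIdeal R⁰ K) + spanSingleton R⁰ b =
      spanSingleton R⁰ (lam : K) *
        (spanSingleton R⁰ a' * (I : FractionalIdeal R⁰ K) + spanSingleton R⁰ b')) :
    ∃ x y z t : K,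
      x ∈ (1 : FractionalIdeal R⁰ K) ∧ t ∈ (1 : FractionalIdeal R⁰ K) ∧
      y ∈ ((I : FractionalIdeal R⁰ K))⁻¹ ∧ z ∈ (I : FractionalIdeal R⁰ K) ∧
      x * t - y * z = 1 ∧
      ∃ c : Kˣ, x * a' + y * b' = (c : K) * a ∧ z * a' + t * b' = (c : K) * b :=
  matrix_carrying_point_to_point_general R K I hI a b a' b' hab' lam hlam
end

section
/- Let R be a Dedekind domain whose class group is trivial, and let S = P¹_R. Then PGL₂(R) acts transitively on the set of sections of S → Spec R; moreover it acts transitively on the set of ordered pairs of everywhere-disjoint sections, and on the set of ordered triples of pairwise everywhere-disjoint sections. -/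
section Aux
variable {R : Type} [CommRing R]

section Aux
variable {R : Type} [CommRing R]

private lemma mv2 (p q r s x y : R) :
    (Matrix.of ![![p,q],![r,s]]).mulVec ![x,y] = ![p*x+q*y, r*x+s*y] := by
  funext i
  fin_cases i <;> simp [Matrix.mulVec, dotProduct, Fin.sum_univ_two]

/-- Any unimodular section is `GL₂`-equivalent to `[1:0]`. -/
private lemma sec_normal (a b : R) (h : IsCoprime a b) :
    ∃ M : GL (Fin 2) R,
      (M : Matrix (Fin 2) (Fin 2) R).mulVec ![1,0] = ![a,b] := by
  obtain ⟨u, v, huv⟩ := h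
  set A : Matrix (Fin 2) (Fin 2) R := Matrix.of ![![a, -v],![b, u]] with hA
  have hdet : IsUnit A := by
    rw [Matrix.isUnit_iff_isUnit_det]
    have : A.det = 1 := by
      rw [Matrix.det_fin_two]
      simp [hA]
      linear_combination huv
    rw [this]; exact isUnit_one
  refine ⟨hdet.unit, ?_⟩
  rw [IsUnit.unit_spec, hA, mv2]
  norm_num

/-- A pair with unit resultant is `GL₂`-equivalent to `([1:0],[0:1])`. -/
private lemma pair_normal (a₁ b₁ a₂ b₂ : R) (h : IsUnit (a₁*b₂ - a₂*b₁)) :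
    ∃ M : GL (Fin 2) R,
      (M : Matrix (Fin 2) (Fin 2) R).mulVec ![1,0] = ![a₁,b₁] ∧
      (M : Matrix (Fin 2) (Fin 2) R).mulVec ![0,1] = ![a₂,b₂] := by
  set A : Matrix (Fin 2) (Fin 2) R := Matrix.of ![![a₁, a₂],![b₁, b₂]] with hA
  have hdet : IsUnit A := by
    rw [Matrix.isUnit_iff_isUnit_det]
    have : A.det = a₁*b₂ - a₂*b₁ := by rw [Matrix.det_fin_two]; simp [hA]
    rw [this]; exact h
  refine ⟨hdet.unit, ?_, ?_⟩ <;> rw [IsUnit.unit_spec, hA, mv2] <;> norm_num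

/-- A pairwise disjoint triple is `GL₂`-equivalent, up to unit scalars,
to `([1:0],[0:1],[1:1])`. -/
private lemma tri_normal (a₁ b₁ a₂ b₂ a₃ b₃ : R)
    (h12 : IsUnit (a₁*b₂ - a₂*b₁)) (h13 : IsUnit (a₁*b₃ - a₃*b₁))
    (h23 : IsUnit (a₂*b₃ - a₃*b₂)) :
    ∃ (M : GL (Fin 2) R) (s t : Rˣ),
      (M : Matrix (Fin 2) (Fin 2) R).mulVec ![1,0] = ![(s:R)*a₁,(s:R)*b₁] ∧
      (M : Matrix (Fin 2) (Fin 2) R).mulVec ![0,1] = ![(t:R)*a₂,(t:R)*b₂] ∧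
      (M : Matrix (Fin 2) (Fin 2) R).mulVec ![1,1] = ![a₃,b₃] := by
  obtain ⟨d, hd⟩ := h12
  obtain ⟨w₁, hw₁⟩ := h23
  obtain ⟨w₂, hw₂⟩ := h13
  set s : Rˣ := (-w₁) * d⁻¹ with hs
  set t : Rˣ := w₂ * d⁻¹ with ht
  have hsd : (s : R) * (d : R) = a₃*b₂ - a₂*b₃ := by
    have : s * d = -w₁ := by rw [hs, inv_mul_cancel_right]
    have h2 : ((s * d : Rˣ) : R) = ((-w₁ : Rˣ) : R) := by rw [this]
    rw [Units.val_mul, Units.val_neg, hw₁] at h2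
    linear_combination h2
  have htd : (t : R) * (d : R) = a₁*b₃ - a₃*b₁ := by
    have : t * d = w₂ := by rw [ht, inv_mul_cancel_right]
    have h2 : ((t * d : Rˣ) : R) = (w₂ : R) := by rw [this]
    rw [Units.val_mul, hw₂] at h2
    exact h2
  have hda : ((s:R)*a₁ + (t:R)*a₂) * (d:R) = a₃ * (d:R) := by
    linear_combination a₁*hsd + a₂*htd - a₃*hd
  have hdb : ((s:R)*b₁ + (t:R)*b₂) * (d:R) = b₃ * (d:R) := by
    linear_combination b₁*hsd + b₂*htd - b₃*hd
  have ha : (s:R)*a₁ + (t:R)*a₂ = a₃ := d.isUnit.mul_right_cancel hda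
  have hb : (s:R)*b₁ + (t:R)*b₂ = b₃ := d.isUnit.mul_right_cancel hdb
  set A : Matrix (Fin 2) (Fin 2) R :=
    Matrix.of ![![(s:R)*a₁, (t:R)*a₂],![(s:R)*b₁, (t:R)*b₂]] with hA
  have hdet : IsUnit A := by
    rw [Matrix.isUnit_iff_isUnit_det]
    have : A.det = ((s*t*d : Rˣ) : R) := by
      rw [Matrix.det_fin_two]
      simp [hA, Units.val_mul, hd]
      ring
    rw [this]; exact (s*t*d).isUnit
  refine ⟨hdet.unit, s, t, ?_, ?_, ?_⟩ <;> rw [IsUnit.unit_spec, hA, mv2]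
  · norm_num
  · norm_num
  · simp only [mul_one]; rw [ha, hb]

/-- Move a normal form along `M * M'⁻¹`, composing unit scalars. -/
private lemma move (M M' : GL (Fin 2) R) (s s' : Rˣ) (v : Fin 2 → R) (a b a' b' : R)
    (h : (M : Matrix (Fin 2) (Fin 2) R).mulVec v = ![(s:R)*a, (s:R)*b])
    (h' : (M' : Matrix (Fin 2) (Fin 2) R).mulVec v = ![(s':R)*a', (s':R)*b']) :
    ((M * M'⁻¹ : GL (Fin 2) R) : Matrix (Fin 2) (Fin 2) R).mulVec ![a',b'] =
      ![((s'⁻¹*s : Rˣ):R)*a, ((s'⁻¹*s : Rˣ):R)*b] := by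
  have h1 : ![a',b'] = ((s'⁻¹ : Rˣ) : R) • ((M' : Matrix (Fin 2) (Fin 2) R).mulVec v) := by
    rw [h']; funext i; fin_cases i <;> simp [← mul_assoc]
  rw [h1, Matrix.mulVec_smul, Matrix.mulVec_mulVec, ← Units.val_mul, inv_mul_cancel_right, h]
  funext i; fin_cases i <;> simp [Units.val_mul, mul_assoc]

end Aux



/-!
Over a Dedekind domain `R` with trivial class group, `PGL₂(R)` acts transitively
on sections of `ℙ¹_R → Spec R`, on ordered pairs of everywhere-disjoint
sections, and on ordered triples of pairwise everywhere-disjoint sections.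
A section is a unimodular pair `[a : b]` (`aR + bR = R`) up to units; two
sections `[a:b]`, `[a':b']` are everywhere disjoint iff `ab' − a'b ∈ R^×`; the
`PGL₂(R)`-action is formulated as: some `M ∈ GL₂(R)` carries one section to the
other up to a unit scalar. -/
theorem pgl2_transitive_on_disjoint_sections
    (R : Type) [CommRing R] [IsDedekindDomain R]
    (hCl : Subsingleton (ClassGroup R)) :
    -- transitivity on sections
    (∀ a b a' b' : R, IsCoprime a b → IsCoprime a' b' →
      ∃ (M : GL (Fin 2) R) (u : Rˣ),
        (M : Matrix (Fin 2) (Fin 2) R).mulVec ![a', b'] = ![(u : R) * a, (u : R) * b]) ∧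
    -- transitivity on ordered pairs of everywhere-disjoint sections
    (∀ a₁ b₁ a₂ b₂ a₁' b₁' a₂' b₂' : R,
      IsCoprime a₁ b₁ → IsCoprime a₂ b₂ → IsCoprime a₁' b₁' → IsCoprime a₂' b₂' →
      IsUnit (a₁ * b₂ - a₂ * b₁) → IsUnit (a₁' * b₂' - a₂' * b₁') →
      ∃ (M : GL (Fin 2) R) (u₁ u₂ : Rˣ),
        (M : Matrix (Fin 2) (Fin 2) R).mulVec ![a₁', b₁'] = ![(u₁ : R) * a₁, (u₁ : R) * b₁] ∧
        (M : Matrix (Fin 2) (Fin 2) R).mulVec ![a₂', b₂'] = ![(u₂ : R) * a₂, (u₂ : R) * b₂]) ∧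
    -- transitivity on ordered triples of pairwise everywhere-disjoint sections
    (∀ a₁ b₁ a₂ b₂ a₃ b₃ a₁' b₁' a₂' b₂' a₃' b₃' : R,
      IsCoprime a₁ b₁ → IsCoprime a₂ b₂ → IsCoprime a₃ b₃ →
      IsCoprime a₁' b₁' → IsCoprime a₂' b₂' → IsCoprime a₃' b₃' →
      IsUnit (a₁ * b₂ - a₂ * b₁) → IsUnit (a₁ * b₃ - a₃ * b₁) → IsUnit (a₂ * b₃ - a₃ * b₂) →
      IsUnit (a₁' * b₂' - a₂' * b₁') → IsUnit (a₁' * b₃' - a₃' * b₁') →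
      IsUnit (a₂' * b₃' - a₃' * b₂') →
      ∃ (M : GL (Fin 2) R) (u₁ u₂ u₃ : Rˣ),
        (M : Matrix (Fin 2) (Fin 2) R).mulVec ![a₁', b₁'] = ![(u₁ : R) * a₁, (u₁ : R) * b₁] ∧
        (M : Matrix (Fin 2) (Fin 2) R).mulVec ![a₂', b₂'] = ![(u₂ : R) * a₂, (u₂ : R) * b₂] ∧
        (M : Matrix (Fin 2) (Fin 2) R).mulVec ![a₃', b₃'] = ![(u₃ : R) * a₃, (u₃ : R) * b₃]) := by
  refine ⟨?_, ?_, ?_⟩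
  · intro a b a' b' hab hab'
    obtain ⟨M, hM⟩ := sec_normal a b hab
    obtain ⟨M', hM'⟩ := sec_normal a' b' hab'
    exact ⟨M * M'⁻¹, 1⁻¹*1, move M M' 1 1 ![1,0] a b a' b'
      (by simp [hM]) (by simp [hM'])⟩
  · intro a₁ b₁ a₂ b₂ a₁' b₁' a₂' b₂' _ _ _ _ h h'
    obtain ⟨M, hM1, hM2⟩ := pair_normal a₁ b₁ a₂ b₂ h
    obtain ⟨M', hM1', hM2'⟩ := pair_normal a₁' b₁' a₂' b₂' h'
    exact ⟨M * M'⁻¹, 1⁻¹*1, 1⁻¹*1,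
      move M M' 1 1 ![1,0] a₁ b₁ a₁' b₁' (by simp [hM1]) (by simp [hM1']),
      move M M' 1 1 ![0,1] a₂ b₂ a₂' b₂' (by simp [hM2]) (by simp [hM2'])⟩
  · intro a₁ b₁ a₂ b₂ a₃ b₃ a₁' b₁' a₂' b₂' a₃' b₃' _ _ _ _ _ _ h12 h13 h23 h12' h13' h23'
    obtain ⟨M, s, t, hM1, hM2, hM3⟩ := tri_normal a₁ b₁ a₂ b₂ a₃ b₃ h12 h13 h23
    obtain ⟨M', s', t', hM1', hM2', hM3'⟩ := tri_normal a₁' b₁' a₂' b₂' a₃' b₃' h12' h13' h23'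
    exact ⟨M * M'⁻¹, s'⁻¹*s, t'⁻¹*t, 1⁻¹*1,
      move M M' s s' ![1,0] a₁ b₁ a₁' b₁' hM1 hM1',
      move M M' t t' ![0,1] a₂ b₂ a₂' b₂' hM2 hM2',
      move M M' 1 1 ![1,1] a₃ b₃ a₃' b₃' (by simp [hM3]) (by simp [hM3'])⟩
end Aux
end
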